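/- If for every finite Λ ⊂ Z^d and every configuration ω' the finite-volume conditional probabilities μ(ω'_Λ | ω'_{Δ \ Λ}) converge, as Δ ↑ Z^d along a cofinal sequence, uniformly (over compatible boundary conditions) to a limit kernel γ_Λ(ω'_Λ | ω'_{Λ^c}), then γ satisfies the DLR equations for μ: ∫ μ(dω') γ_Λ(ω'_Λ | ω') = μ(ω'_Λ). (Martingale/L¹-convergence argument via Lévy's zero-one law.) -/

import Mathlib

open scoped BigOperators

/-- Sites of the lattice `ℤ^d`. -/
abbrev Site (d : ℕ) := Fin d → ℤ

/-- Nearest-neighbor relation: `ℓ¹`-distance one. -/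
def adj {d : ℕ} (x y : Site d) : Prop := (∑ i, |x i - y i|) = 1

open Classical in
/-- The projection to non-isolates: `(Tω)_x = ω_x (1 - ∏_{y ∈ ∂x} (1 - ω_y))`,
i.e. a site stays occupied iff it is occupied and has an occupied neighbor. -/
noncomputable def T {d : ℕ} (ω : Site d → Bool) : Site d → Bool :=
  fun x => ω x && (if ∃ y, adj x y ∧ ω y = true then true else false)


/-!
For each `n`, the elementary conditional probability of the cylinder `{σ_Λ = ζ_Λ}` given the
coordinates in `Δ n \ Λ` integrates to `μ {σ_Λ = ζ_Λ}` (law of total probability over the finitely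
many boundary configurations), and outside the null set of boundary configurations of probability
zero it is within `ε n` of `γ ζ`. Hence `|∫ γ ζ dμ - μ {σ_Λ = ζ_Λ}| ≤ ε n` for every `n`; the
uniformity of the convergence makes a martingale argument unnecessary.
-/

open MeasureTheory ProbabilityTheory Filter Set

lemma Finset.restrict_preimage_singleton {ι : Type*} {π : ι → Type*} (s : Finset ι)
    (ω : ∀ i, π i) : s.restrict ⁻¹' {s.restrict ω} = {σ | ∀ i ∈ s, σ i = ω i} := by
  ext σ
  simp [funext_iff]

section Fibers

variable {Ω α : Type*} [MeasurableSpace Ω] [MeasurableSpace α] {μ : Measure Ω} {X : Ω → α}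

lemma ProbabilityTheory.toReal_cond_apply {s : Set Ω} (hs : MeasurableSet s) (t : Set Ω) :
    (μ[t | s]).toReal = (μ (s ∩ t)).toReal / (μ s).toReal := by
  rw [cond_apply hs, ENNReal.toReal_mul, ENNReal.toReal_inv, inv_mul_eq_div]

lemma ae_measure_preimage_singleton_ne_zero [Countable α] [MeasurableSingletonClass α]
    (hX : Measurable X) : ∀ᵐ ω ∂μ, μ (X ⁻¹' {X ω}) ≠ 0 := by
  refine ae_of_ae_map (p := fun y => μ (X ⁻¹' {y}) ≠ 0) hX.aemeasurable
    (ae_iff_of_countable.2 fun y hy => ?_)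
  rwa [Measure.map_apply hX (measurableSet_singleton y)] at hy

variable [IsFiniteMeasure μ]

lemma integrable_comp_of_finite [Finite α] [MeasurableSingletonClass α] {E : Type*}
    [NormedAddCommGroup E] (hX : Measurable X) (f : α → E) : Integrable (fun ω => f (X ω)) μ :=
  (integrable_map_measure Integrable.of_finite.aestronglyMeasurable hX.aemeasurable).1
    .of_finite

lemma integral_toReal_cond_fiber [Fintype α] [DiscreteMeasurableSpace α] (hX : Measurable X)
    (A : Set Ω) : ∫ ω, (μ[A | X ⁻¹' {X ω}]).toReal ∂μ = (μ A).toReal := by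
  rw [← integral_map (f := fun y => (μ[A | X ⁻¹' {y}]).toReal) hX.aemeasurable
      (Measurable.of_discrete.aestronglyMeasurable),
    integral_fintype (.of_finite)]
  conv_rhs => rw [← sum_meas_smul_cond_fiber hX μ]
  simp only [Measure.coe_finsetSum, Measure.coe_smul, Finset.sum_apply, Pi.smul_apply,
    smul_eq_mul, Measure.real, Measure.map_apply hX (measurableSet_singleton _)]
  rw [ENNReal.toReal_sum fun y _ => ENNReal.mul_ne_top (measure_ne_top _ _) (measure_ne_top _ _)]
  simp only [ENNReal.toReal_mul]

end Fibers

lemma norm_integral_sub_integral_le {Ω E : Type*} [MeasurableSpace Ω] [NormedAddCommGroup E]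
    [NormedSpace ℝ E] {μ : Measure Ω} [IsFiniteMeasure μ] {f g : Ω → E} {c : ℝ}
    (hf : Integrable f μ) (hg : AEStronglyMeasurable g μ) (hfg : ∀ᵐ ω ∂μ, ‖f ω - g ω‖ ≤ c) :
    ‖∫ ω, f ω ∂μ - ∫ ω, g ω ∂μ‖ ≤ c * μ.real univ := by
  have hdiff : Integrable (f - g) μ := .of_bound (hf.aestronglyMeasurable.sub hg) c hfg
  have hg' : Integrable g μ := by simpa using hf.sub hdiff
  rw [← integral_sub hf hg']
  exact norm_integral_le_of_norm_le_const hfg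

theorem dlr_from_uniform_limit_general {d : ℕ}
    (μ : Measure (Site d → Bool)) [IsProbabilityMeasure μ]
    (Λ : Finset (Site d)) (Δ : ℕ → Finset (Site d))
    (γ : (Site d → Bool) → (Site d → Bool) → ℝ)
    (hγmeas : ∀ ζ, Measurable (γ ζ))
    (ε : ℕ → ℝ) (hε : Tendsto ε atTop (nhds 0))
    (hconv : ∀ (n : ℕ) (ζ ω : Site d → Bool),
      μ {σ | ∀ i ∈ Δ n \ Λ, σ i = ω i} ≠ 0 →
      |(μ {σ | (∀ i ∈ Λ, σ i = ζ i) ∧ ∀ i ∈ Δ n \ Λ, σ i = ω i}).toReal /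
          (μ {σ | ∀ i ∈ Δ n \ Λ, σ i = ω i}).toReal - γ ζ ω| ≤ ε n) :
    ∀ ζ : Site d → Bool, ∫ ω, γ ζ ω ∂μ = (μ {σ | ∀ i ∈ Λ, σ i = ζ i}).toReal := by
  intro ζ
  set A : Set (Site d → Bool) := {σ | ∀ i ∈ Λ, σ i = ζ i}
  have approx : ∀ n, |(μ A).toReal - ∫ ω, γ ζ ω ∂μ| ≤ ε n := by
    intro n
    have hX := (Δ n \ Λ).measurable_restrict (X := fun _ => Bool)
    rw [← integral_toReal_cond_fiber hX A, ← Real.norm_eq_abs, ← mul_one (ε n),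
      ← probReal_univ (μ := μ)]
    refine norm_integral_sub_integral_le
      (integrable_comp_of_finite hX fun η => (μ[A | (Δ n \ Λ).restrict ⁻¹' {η}]).toReal)
      (hγmeas ζ).aestronglyMeasurable ?_
    filter_upwards [ae_measure_preimage_singleton_ne_zero hX] with ω hω
    rw [Finset.restrict_preimage_singleton] at hω
    rw [toReal_cond_apply (hX (measurableSet_singleton _)), Finset.restrict_preimage_singleton,
      inter_comm, ← ofPred_and]
    simpa only [Real.norm_eq_abs] using hconv n ζ ω hω
  exact (sub_eq_zero.1 (abs_nonpos_iff.1 (ge_of_tendsto' hε approx))).symm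

/-- if the finite-volume conditional probabilities
`μ(ω'_Λ | ω'_{Δ_n \ Λ})` converge, as `Δ_n ↑ ℤ^d` along a cofinal monotone sequence,
uniformly over (compatible, i.e. positive-probability) boundary conditions to a limit
kernel `γ`, then `γ` satisfies the DLR equation for `μ`:
`∫ γ_Λ(ζ | ω') μ(dω') = μ({ω'_Λ = ζ})`. -/
theorem dlr_from_uniform_limit {d : ℕ}
    (μ : Measure (Site d → Bool)) [IsProbabilityMeasure μ]
    (Λ : Finset (Site d)) (Δ : ℕ → Finset (Site d))
    (hmono : Monotone Δ) (hcof : ∀ x : Site d, ∃ n, x ∈ Δ n) (hΛ : ∀ n, Λ ⊆ Δ n)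
    (γ : (Site d → Bool) → (Site d → Bool) → ℝ)
    (hγmeas : ∀ ζ, Measurable (γ ζ))
    (ε : ℕ → ℝ) (hε : Tendsto ε atTop (nhds 0))
    (hconv : ∀ (n : ℕ) (ζ ω : Site d → Bool),
      μ {σ | ∀ i ∈ Δ n \ Λ, σ i = ω i} ≠ 0 →
      |(μ {σ | (∀ i ∈ Λ, σ i = ζ i) ∧ ∀ i ∈ Δ n \ Λ, σ i = ω i}).toReal /
          (μ {σ | ∀ i ∈ Δ n \ Λ, σ i = ω i}).toReal - γ ζ ω| ≤ ε n) :
    ∀ ζ : Site d → Bool, ∫ ω, γ ζ ω ∂μ = (μ {σ | ∀ i ∈ Λ, σ i = ζ i}).toReal :=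
  dlr_from_uniform_limit_general μ Λ Δ γ hγmeas ε hε hconv
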